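/- arXiv:1405.6040 — 2 statements merged into one kernel-verified Lean document; each statement's English description precedes it below -/
import Mathlib

section
/- Let σ, τ be 2-cocycles on a Hopf algebra H. The maps Δ^τ_{σ,τ} = Δ : H(σ,τ) → H(σ,τ) ⊗ H(τ,τ) and Δ^σ_{σ,τ} = Δ : H(σ,τ) → H(σ,σ) ⊗ H(σ,τ), given by the comultiplication of H, are algebra homomorphisms. -/
/-!
In the convolution algebras `Conv(H ⊗ H, B)`, the product of `H(σ,τ)` is `σ * μ * τ⁻¹`, where `μ`
is the multiplication of `H` and the scalar-valued `σ`, `τ⁻¹` act through `k → B`. Composing with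
an algebra map (`Δ`, or one of the inclusions `ι₁, ι₂ : H → H ⊗ H`) is a ring hom of convolution
algebras, and `ι₁ f * ι₂ g = (f ⊗ g) ∘ Δ`; in particular `Δ ∘ μ = ι₁ μ * ι₂ μ` says that `Δ` is
multiplicative. Hence
`Δ ∘ (σ * μ * τ⁻¹) = σ * ι₁ μ * ι₂ μ * τ⁻¹ = ι₁ (σ * μ * τ⁻¹) * ι₂ (τ * μ * τ⁻¹)`,
by inserting `τ⁻¹ * τ = ε` in the middle; inserting `σ⁻¹ * σ` instead gives the second map.
-/

open Coalgebra

universe u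

variable (k H : Type*) [Field k] [Ring H] [HopfAlgebra k H]

def IsRightCocycle (σ : H →ₗ[k] H →ₗ[k] k) : Prop :=
  ∀ (h g l : H) (ιh : Type u) (rh : Coalgebra.Repr k h ιh) (ιg : Type u)
    (rg : Coalgebra.Repr k g ιg)
    (ιl : Type u) (rl : Coalgebra.Repr k l ιl),
    ∑ i ∈ rh.index, ∑ j ∈ rg.index,
        σ (rh.left i) (rg.left j) * σ (rh.right i * rg.right j) l
      = ∑ j ∈ rg.index, ∑ m ∈ rl.index,
        σ (rg.left j) (rl.left m) * σ h (rg.right j * rl.right m)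

def IsUnitalCocycle (σ : H →ₗ[k] H →ₗ[k] k) : Prop :=
  ∀ h : H, σ h 1 = Coalgebra.counit (R := k) h ∧ σ 1 h = Coalgebra.counit (R := k) h

def IsConvInverse (σ σ' : H →ₗ[k] H →ₗ[k] k) : Prop :=
  ∀ (h g : H) (ιh : Type u) (rh : Coalgebra.Repr k h ιh) (ιg : Type u)
    (rg : Coalgebra.Repr k g ιg),
    (∑ i ∈ rh.index, ∑ j ∈ rg.index,
        σ (rh.left i) (rg.left j) * σ' (rh.right i) (rg.right j)
      = Coalgebra.counit (R := k) h * Coalgebra.counit (R := k) g)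
    ∧ (∑ i ∈ rh.index, ∑ j ∈ rg.index,
        σ' (rh.left i) (rg.left j) * σ (rh.right i) (rg.right j)
      = Coalgebra.counit (R := k) h * Coalgebra.counit (R := k) g)

/-- `m h g = σ(h₁,g₁) h₂g₂ σ'(h₃,g₃)`. -/
def IsCocycleProduct (σ σ' : H →ₗ[k] H →ₗ[k] k) (m : H →ₗ[k] H →ₗ[k] H) : Prop :=
  ∀ (h g : H) (ιh : Type u) (rh : Coalgebra.Repr k h ιh)
    (κh : ιh → Type u) (rh2 : ∀ i : ιh, Coalgebra.Repr k (rh.right i) (κh i))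
    (ιg : Type u) (rg : Coalgebra.Repr k g ιg)
    (κg : ιg → Type u) (rg2 : ∀ j : ιg, Coalgebra.Repr k (rg.right j) (κg j)),
    m h g = ∑ i ∈ rh.index, ∑ j ∈ rg.index, ∑ a ∈ (rh2 i).index, ∑ b ∈ (rg2 j).index,
      (σ (rh.left i) (rg.left j) * σ' ((rh2 i).right a) ((rg2 j).right b))
        • ((rh2 i).left a * (rg2 j).left b)

open TensorProduct WithConv

lemma Coalgebra.Repr.convMul_tmul_apply {R A B D : Type*} [CommSemiring R] [AddCommMonoid A]
    [Module R A] [CoalgebraStruct R A] [AddCommMonoid B] [Module R B] [CoalgebraStruct R B]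
    [Semiring D] [Algebra R D] {a : A} {b : B} {ι κ : Type*} (ra : Repr R a ι) (rb : Repr R b κ)
    (f g : WithConv (A ⊗[R] B →ₗ[R] D)) :
    (f * g) (a ⊗ₜ[R] b) = ∑ i ∈ ra.index, ∑ j ∈ rb.index,
      f (ra.left i ⊗ₜ[R] rb.left j) * g (ra.right i ⊗ₜ[R] rb.right j) := by
  simp only [LinearMap.convMul_apply, comul_tmul, ← ra.eq, ← rb.eq, tmul_sum, sum_tmul, map_sum,
    AlgebraTensorModule.tensorTensorTensorComm_tmul]
  exact Finset.sum_comm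

namespace AlgHom

variable {R C A B : Type*} [CommSemiring R] [AddCommMonoid C] [Module R C] [Coalgebra R C]
  [Semiring A] [Algebra R A] [Semiring B] [Algebra R B]

noncomputable def compConv (φ : A →ₐ[R] B) : WithConv (C →ₗ[R] A) →+* WithConv (C →ₗ[R] B) where
  toFun f := toConv (φ.toLinearMap ∘ₗ f.ofConv)
  map_one' := by ext; simp
  map_mul' f g := by rw [LinearMap.algHom_comp_convMul_distrib]
  map_zero' := by ext; simp
  map_add' f g := by ext; simp

@[simp] lemma compConv_apply (φ : A →ₐ[R] B) (f : WithConv (C →ₗ[R] A)) (c : C) :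
    φ.compConv f c = φ (f c) := rfl

lemma compConv_compConv_ofId (φ : A →ₐ[R] B) (f : WithConv (C →ₗ[R] R)) :
    φ.compConv ((Algebra.ofId R A).compConv f) = (Algebra.ofId R B).compConv f := by
  ext; simp

end AlgHom

open Algebra.TensorProduct in
lemma includeLeft_compConv_mul_includeRight_compConv {R C A B : Type*} [CommSemiring R]
    [AddCommMonoid C] [Module R C] [Coalgebra R C]
    [Semiring A] [Algebra R A] [Semiring B] [Algebra R B]
    (f : WithConv (C →ₗ[R] A)) (g : WithConv (C →ₗ[R] B)) :
    (includeLeft (S := R)).compConv f * includeRight.compConv g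
      = toConv (map f.ofConv g.ofConv ∘ₗ comul) := by
  ext c
  simp [(ℛ R c).convMul_apply, ← (ℛ R c).eq]

namespace Bialgebra

open Algebra.TensorProduct

variable {R A : Type*} [CommSemiring R] [Semiring A] [Bialgebra R A]

lemma comulAlgHom_compConv_mul' :
    (comulAlgHom R A).compConv (toConv (LinearMap.mul' R A))
      = (includeLeft (S := R)).compConv (toConv (LinearMap.mul' R A))
        * includeRight.compConv (toConv (LinearMap.mul' R A)) := by
  rw [includeLeft_compConv_mul_includeRight_compConv]
  exact congrArg toConv (mulCoalgHom R A).map_comp_comul.symm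

variable (A) in
/-- `cocycleMul A σ τ'` is the product `h ⋅ g = σ(h₁,g₁) h₂g₂ τ'(h₃,g₃)` of `A(σ,τ)` when `τ'`
is the convolution inverse of `τ`. -/
noncomputable def cocycleMul (p q : WithConv (A ⊗[R] A →ₗ[R] R)) :
    WithConv (A ⊗[R] A →ₗ[R] A) :=
  (Algebra.ofId R A).compConv p * toConv (LinearMap.mul' R A) * (Algebra.ofId R A).compConv q

lemma comulAlgHom_compConv_cocycleMul (p q r r' : WithConv (A ⊗[R] A →ₗ[R] R))
    (hr : r * r' = 1) :
    (comulAlgHom R A).compConv (cocycleMul A p q)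
      = (includeLeft (S := R)).compConv (cocycleMul A p r)
        * includeRight.compConv (cocycleMul A r' q) := by
  simp only [cocycleMul, map_mul, AlgHom.compConv_compConv_ofId, comulAlgHom_compConv_mul',
    mul_assoc]
  rw [← mul_assoc ((Algebra.ofId R _).compConv r), ← map_mul, hr, map_one, one_mul]

lemma comul_apply_eq_sum_of_compConv_eq {m m₁ m₂ : A →ₗ[R] A →ₗ[R] A}
    (e : (comulAlgHom R A).compConv (toConv (lift m))
      = (includeLeft (S := R)).compConv (toConv (lift m₁)) * includeRight.compConv (toConv (lift m₂)))
    {h g : A} {ι κ : Type*} (rh : Repr R h ι) (rg : Repr R g κ) :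
    comul (m h g) = ∑ i ∈ rh.index, ∑ j ∈ rg.index,
      m₁ (rh.left i) (rg.left j) ⊗ₜ[R] m₂ (rh.right i) (rg.right j) := by
  simpa [rh.convMul_tmul_apply rg] using congrArg (fun F => F (h ⊗ₜ[R] g)) e

end Bialgebra

/-- `IsConvInverse` and `IsCocycleProduct` only quantify over representations indexed in `Type u`. -/
noncomputable def Coalgebra.Repr.toULiftFin {R A : Type*} [CommSemiring R] [AddCommMonoid A]
    [Module R A] [CoalgebraStruct R A] {a : A} {ι : Type*} (r : Repr R a ι) :
    Repr R a (ULift.{u} (Fin r.index.card)) where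
  index := Finset.univ
  left i := r.left (r.index.equivFin.symm i.down)
  right i := r.right (r.index.equivFin.symm i.down)
  eq := by
    rw [← r.eq, ← Finset.sum_attach r.index (fun i => r.left i ⊗ₜ[R] r.right i)]
    exact Fintype.sum_equiv (Equiv.ulift.trans r.index.equivFin.symm) _ _ fun _ => rfl

section
variable {k H}

lemma IsConvInverse.convMul_lift_eq_one {σ σ' : H →ₗ[k] H →ₗ[k] k}
    (hinv : IsConvInverse.{u} k H σ σ') : toConv (lift σ') * toConv (lift σ) = 1 := by
  refine WithConv.ext (TensorProduct.ext' fun x y => ?_)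
  let rx := (ℛ k x).toULiftFin.{u}
  let ry := (ℛ k y).toULiftFin.{u}
  simpa [rx.convMul_tmul_apply ry, mul_comm (counit x)] using
    (hinv x y _ rx _ ry).2

lemma IsCocycleProduct.toConv_lift_eq {σ σ' : H →ₗ[k] H →ₗ[k] k} {m : H →ₗ[k] H →ₗ[k] H}
    (hm : IsCocycleProduct.{u} k H σ σ' m) :
    toConv (lift m) = Bialgebra.cocycleMul H (toConv (lift σ)) (toConv (lift σ')) := by
  refine WithConv.ext (TensorProduct.ext' fun x y => ?_)
  let rx := (ℛ k x).toULiftFin.{u}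
  let ry := (ℛ k y).toULiftFin.{u}
  let rxR i := (ℛ k (rx.right i)).toULiftFin.{u}
  let ryR j := (ℛ k (ry.right j)).toULiftFin.{u}
  rw [lift.tmul, hm x y _ rx _ rxR _ ry _ ryR, Bialgebra.cocycleMul, mul_assoc,
    rx.convMul_tmul_apply ry]
  refine Finset.sum_congr rfl fun i _ => Finset.sum_congr rfl fun j _ => ?_
  rw [(rxR i).convMul_tmul_apply (ryR j), Finset.mul_sum]
  refine Finset.sum_congr rfl fun a _ => ?_
  rw [Finset.mul_sum]
  refine Finset.sum_congr rfl fun b _ => ?_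
  simp only [AlgHom.compConv_apply, lift.tmul, Algebra.ofId_apply, LinearMap.mul'_apply]
  rw [Algebra.smul_def, map_mul, mul_assoc]
  exact congrArg _ (Algebra.commutes _ _)

end

theorem comul_is_algebra_hom_cocycle_algebras (σ σ' τ τ' : H →ₗ[k] H →ₗ[k] k)
    (hσinv : IsConvInverse.{u} k H σ σ')
    (hτinv : IsConvInverse.{u} k H τ τ')
    (mστ mττ mσσ : H →ₗ[k] H →ₗ[k] H)
    (hστ : IsCocycleProduct.{u} k H σ τ' mστ)
    (hττ : IsCocycleProduct.{u} k H τ τ' mττ)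
    (hσσ : IsCocycleProduct.{u} k H σ σ' mσσ) :
    (∀ (h g : H) (ιh : Type u) (rh : Coalgebra.Repr k h ιh) (ιg : Type u)
        (rg : Coalgebra.Repr k g ιg),
      Coalgebra.comul (R := k) (mστ h g)
        = ∑ i ∈ rh.index, ∑ j ∈ rg.index,
            mστ (rh.left i) (rg.left j) ⊗ₜ[k] mττ (rh.right i) (rg.right j))
    ∧ (∀ (h g : H) (ιh : Type u) (rh : Coalgebra.Repr k h ιh) (ιg : Type u)
        (rg : Coalgebra.Repr k g ιg),
      Coalgebra.comul (R := k) (mστ h g)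
        = ∑ i ∈ rh.index, ∑ j ∈ rg.index,
            mσσ (rh.left i) (rg.left j) ⊗ₜ[k] mστ (rh.right i) (rg.right j))
    ∧ Coalgebra.comul (R := k) (1 : H) = (1 : H) ⊗ₜ[k] (1 : H) := by
  refine ⟨fun h g _ rh _ rg => ?_, fun h g _ rh _ rg => ?_, ?_⟩
  · refine Bialgebra.comul_apply_eq_sum_of_compConv_eq ?_ rh rg
    rw [hστ.toConv_lift_eq, hττ.toConv_lift_eq]
    exact Bialgebra.comulAlgHom_compConv_cocycleMul _ _ _ _ hτinv.convMul_lift_eq_one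
  · refine Bialgebra.comul_apply_eq_sum_of_compConv_eq ?_ rh rg
    rw [hστ.toConv_lift_eq, hσσ.toConv_lift_eq]
    exact Bialgebra.comulAlgHom_compConv_cocycleMul _ _ _ _ hσinv.convMul_lift_eq_one
  · rw [Bialgebra.comul_one, Algebra.TensorProduct.one_def]
end

section
/- Let H be a Hopf algebra and A a left H-module algebra. Then A⊗A (= A^e) is an (A#H)-bimodule with actions (a#h)·(x⊗y) = a(h·x)⊗y and (x⊗y)·(b#g) = x ⊗ (S⁻¹g)·(yb). -/
/-! The left structure acts on the first tensor factor and the right one on the second, so all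
axioms but the right smash relation are immediate. That relation is the identity
`(S⁻¹g · z) c = ∑ S⁻¹g₂ · (z (g₁ · c))`: expanding the right side with the module-algebra axiom
and `Δ(S⁻¹x) = ∑ S⁻¹x₂ ⊗ S⁻¹x₁` leaves `∑ S⁻¹g₃ ⊗ S⁻¹g₂ g₁ = S⁻¹g ⊗ 1`, which is coassociativity
plus `∑ S⁻¹g₂ g₁ = ε(g)`. The formula for `Δ(S⁻¹x)` comes from `Δ ∘ S = (S ⊗ S) ∘ τ ∘ Δ`, proved
in the convolution algebra: `Δ = ι₁ ⋆ ι₂` and `(S ⊗ S) τ Δ = (ι₂ S) ⋆ (ι₁ S)` make the latter a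
left inverse of `Δ`, while `Δ ∘ S` is a right inverse. -/

open Coalgebra TensorProduct WithConv

namespace HopfAlgebra

variable {R C : Type*} [CommSemiring R] [Semiring C] [HopfAlgebra R C]

lemma algHom_comp_antipode_convMul {A : Type*} [Semiring A] [Algebra R A] (f : C →ₐ[R] A) :
    toConv (f.toLinearMap ∘ₗ antipode R) * toConv f.toLinearMap = 1 := by
  have := LinearMap.algHom_comp_convMul_distrib f (toConv (antipode R)) (toConv LinearMap.id)
  rw [LinearMap.antipode_mul_id] at this
  ext c
  simpa using (congrArg (fun g => g c) this).symm

lemma comul_comp_antipode :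
    comul ∘ₗ antipode R = map (antipode R) (antipode R) ∘ₗ (TensorProduct.comm R C C).toLinearMap
      ∘ₗ (comul : C →ₗ[R] C ⊗[R] C) := by
  let inl := (Algebra.TensorProduct.includeLeft : C →ₐ[R] C ⊗[R] C)
  let inr := (Algebra.TensorProduct.includeRight : C →ₐ[R] C ⊗[R] C)
  have comul_eq : toConv comul = toConv inl.toLinearMap * toConv inr.toLinearMap := by
    ext c
    simp [(ℛ R c).convMul_apply, inl, inr, ← (ℛ R c).eq]
  have rhs_eq : toConv (map (antipode R) (antipode R) ∘ₗ (TensorProduct.comm R C C).toLinearMap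
      ∘ₗ comul) =
      toConv (inr.toLinearMap ∘ₗ antipode R) * toConv (inl.toLinearMap ∘ₗ antipode R) := by
    ext c
    simp [(ℛ R c).convMul_apply, inl, inr, ← (ℛ R c).eq]
  have left_inv : toConv (inr.toLinearMap ∘ₗ antipode R) * toConv (inl.toLinearMap ∘ₗ antipode R)
      * toConv comul = 1 := by
    rw [comul_eq, mul_assoc, ← mul_assoc (toConv (inl.toLinearMap ∘ₗ _)),
      algHom_comp_antipode_convMul, one_mul, algHom_comp_antipode_convMul]
  apply WithConv.toConv_injective
  rw [rhs_eq]
  exact (left_inv_eq_right_inv left_inv LinearMap.comul_right_inv).symm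

lemma comul_antipode {ι : Type*} {a : C} (𝓡 : Repr R a ι) :
    comul (antipode R a) =
      ∑ i ∈ 𝓡.index, antipode R (𝓡.right i) ⊗ₜ[R] antipode R (𝓡.left i) := by
  have h := LinearMap.congr_fun (comul_comp_antipode (R := R) (C := C)) a
  simp_all [← 𝓡.eq, map_sum]

section InverseAntipode

variable (Sinv : C →ₗ[R] C) (hS : ∀ c, Sinv (antipode R c) = c ∧ antipode R (Sinv c) = c)
include hS

lemma antipode_injective : Function.Injective (antipode R : C →ₗ[R] C) :=
  fun a b hab => by rw [← (hS a).1, hab, (hS b).1]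

lemma invAntipode_one : Sinv 1 = 1 := by
  simpa using (hS 1).1

lemma invAntipode_mul (a b : C) : Sinv (a * b) = Sinv b * Sinv a := by
  apply antipode_injective Sinv hS
  rw [antipode_mul_antidistrib, (hS _).2, (hS _).2, (hS _).2]

lemma sum_invAntipode_right_mul_left {ι : Type*} {a : C} (𝓡 : Repr R a ι) :
    ∑ i ∈ 𝓡.index, Sinv (𝓡.right i) * 𝓡.left i = counit (R := R) a • 1 := by
  apply antipode_injective Sinv hS
  simp [map_sum, antipode_mul_antidistrib, (hS _).2, sum_antipode_mul_eq_smul]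

lemma comul_invAntipode {ι : Type*} {a : C} (𝓡 : Repr R a ι) :
    comul (Sinv a) = ∑ i ∈ 𝓡.index, Sinv (𝓡.right i) ⊗ₜ[R] Sinv (𝓡.left i) := by
  have h := congrArg (map Sinv Sinv ∘ₗ (TensorProduct.comm R C C).toLinearMap)
    (comul_antipode (ℛ R (Sinv a)))
  rw [(hS a).2, ← 𝓡.eq] at h
  simpa [map_sum, (hS _).1, (ℛ R (Sinv a)).eq] using h.symm

lemma sum_comul_invAntipode_right_mul {ι : Type*} {a : C} (𝓡 : Repr R a ι) :
    ∑ i ∈ 𝓡.index, comul (Sinv (𝓡.right i)) * (1 ⊗ₜ[R] 𝓡.left i) = Sinv a ⊗ₜ[R] 1 := by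
  let shuffle : C ⊗[R] (C ⊗[R] C) →ₗ[R] C ⊗[R] C :=
    (TensorProduct.comm R C C).toLinearMap ∘ₗ (LinearMap.mul' R C).rTensor C ∘ₗ
      (TensorProduct.assoc R C C C).symm.toLinearMap ∘ₗ
      (TensorProduct.leftComm R C C C).toLinearMap
  have coassoc := congrArg shuffle (sum_map_tmul_tmul_eq LinearMap.id Sinv Sinv a (repr := 𝓡)
    (a₁ := fun i => ℛ R (𝓡.left i)) (a₂ := fun i => ℛ R (𝓡.right i)))
  simp only [map_sum, LinearMap.id_apply] at coassoc
  calc ∑ i ∈ 𝓡.index, comul (Sinv (𝓡.right i)) * (1 ⊗ₜ[R] 𝓡.left i)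
      = ∑ i ∈ 𝓡.index, ∑ j ∈ (ℛ R (𝓡.right i)).index,
          shuffle (𝓡.left i ⊗ₜ
            (Sinv ((ℛ R (𝓡.right i)).left j) ⊗ₜ Sinv ((ℛ R (𝓡.right i)).right j))) := by
        simp [comul_invAntipode Sinv hS (ℛ R _), Finset.sum_mul, shuffle]
    _ = ∑ i ∈ 𝓡.index, Sinv (𝓡.right i) ⊗ₜ[R] (counit (R := R) (𝓡.left i) • 1) := by
        rw [coassoc]
        simp [shuffle, ← tmul_sum, sum_invAntipode_right_mul_left Sinv hS]
    _ = Sinv a ⊗ₜ[R] 1 := by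
        simp_rw [← smul_tmul, ← sum_tmul, ← map_smul, ← map_sum, sum_counit_smul]

end InverseAntipode

end HopfAlgebra

universe v

lemma Coalgebra.exists_repr_ulift_fin {R C : Type*} [CommSemiring R] [AddCommMonoid C]
    [Module R C] [Coalgebra R C] (c : C) : ∃ n, Nonempty (Repr R c (ULift.{v} (Fin n))) := by
  obtain ⟨n, x, y, hxy⟩ := TensorProduct.exists_sum_tmul_eq (comul (R := R) c)
  refine ⟨n, ⟨⟨Finset.univ, x ∘ ULift.down, y ∘ ULift.down, ?_⟩⟩⟩
  rw [hxy]
  exact Equiv.ulift.sum_comp fun j => x j ⊗ₜ[R] y j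

section ModuleAlgebra

variable {R H A : Type*} [CommSemiring R] [Semiring H] [HopfAlgebra R H] [Semiring A]
  [Algebra R A] (act : H →ₗ[R] A →ₗ[R] A)

lemma toConv_flip_mul_of_forall_repr
    (act_mul_repr : ∀ (h : H) (a b : A) (ι : Type v) (r : Repr R h ι),
      act h (a * b) = ∑ i ∈ r.index, act (r.left i) a * act (r.right i) b) (a b : A) :
    toConv (act.flip (a * b)) = toConv (act.flip a) * toConv (act.flip b) := by
  ext h
  obtain ⟨n, ⟨r⟩⟩ := Coalgebra.exists_repr_ulift_fin.{v} (R := R) h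
  simp [r.convMul_apply, act_mul_repr h a b _ r]

lemma act_invAntipode_apply_mul (act_one : ∀ a, act 1 a = a)
    (act_mul : ∀ (g h : H) (a : A), act (g * h) a = act g (act h a))
    (act_mul_conv : ∀ a b : A,
      toConv (act.flip (a * b)) = toConv (act.flip a) * toConv (act.flip b))
    (Sinv : H →ₗ[R] H)
    (hS : ∀ h, Sinv (HopfAlgebra.antipode R h) = h ∧ HopfAlgebra.antipode R (Sinv h) = h)
    {ι : Type*} {g : H} (𝓡 : Repr R g ι) (z c : A) :
    act (Sinv g) z * c = ∑ i ∈ 𝓡.index, act (Sinv (𝓡.right i)) (z * act (𝓡.left i) c) := by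
  let Φ (x y : A) : H ⊗[R] H →ₗ[R] A := LinearMap.mul' R A ∘ₗ map (act.flip x) (act.flip y)
  have shift (u : H ⊗[R] H) (x : H) : Φ z c (u * (1 ⊗ₜ x)) = Φ z (act x c) u := by
    induction u using TensorProduct.induction_on with
    | zero => simp
    | tmul p q => simp [Φ, act_mul]
    | add u v hu hv => simp only [add_mul, map_add, hu, hv]
  symm
  calc ∑ i ∈ 𝓡.index, act (Sinv (𝓡.right i)) (z * act (𝓡.left i) c)
      = ∑ i ∈ 𝓡.index, Φ z (act (𝓡.left i) c) (comul (Sinv (𝓡.right i))) := by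
        refine Finset.sum_congr rfl fun i _ => ?_
        simpa [Φ] using
          congrArg (fun f => f (Sinv (𝓡.right i))) (act_mul_conv z (act (𝓡.left i) c))
    _ = Φ z c (∑ i ∈ 𝓡.index, comul (Sinv (𝓡.right i)) * (1 ⊗ₜ[R] 𝓡.left i)) := by
        simp [map_sum, shift]
    _ = act (Sinv g) z * c := by
        simp [HopfAlgebra.sum_comul_invAntipode_right_mul Sinv hS, Φ, act_one]

end ModuleAlgebra

/- STATEMENT 13: for a Hopf algebra H (bijective antipode) and a left H-module
algebra A, the space `A ⊗ A` is an `(A#H)`-bimodule with actions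
`(a#h)·(x⊗y) = a(h·x)⊗y` and `(x⊗y)·(b#g) = x ⊗ (S⁻¹g)·(yb)`. -/

open Coalgebra TensorProduct

universe u

variable (k H A : Type*) [Field k] [Ring H] [HopfAlgebra k H]
  [Ring A] [Algebra k A]

def IsModuleAlgebra (act : H →ₗ[k] A →ₗ[k] A) : Prop :=
  (∀ a : A, act 1 a = a)
  ∧ (∀ (g h : H) (a : A), act (g * h) a = act g (act h a))
  ∧ (∀ h : H, act h 1 = Coalgebra.counit (R := k) h • (1 : A))
  ∧ (∀ (h : H) (a b : A) (ι : Type u) (r : Coalgebra.Repr k h ι),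
      act h (a * b) = ∑ i ∈ r.index, act (r.left i) a * act (r.right i) b)

/-- `N` is an `(A#H)`-bimodule, encoded by left actions `lN, lHN` of A and H
(with the smash relation) and right actions `rN, rHN`, all pairwise commuting. -/
def IsSmashBimodule {N : Type*} [AddCommGroup N] [Module k N]
    (act : H →ₗ[k] A →ₗ[k] A)
    (lN rN : A →ₗ[k] N →ₗ[k] N) (lHN rHN : H →ₗ[k] N →ₗ[k] N) : Prop :=
  (∀ n : N, lN 1 n = n) ∧ (∀ (a b : A) (n : N), lN (a * b) n = lN a (lN b n))
  ∧ (∀ n : N, lHN 1 n = n) ∧ (∀ (g h : H) (n : N), lHN (g * h) n = lHN g (lHN h n))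
  ∧ (∀ (h : H) (a : A) (n : N) (ι : Type u) (r : Coalgebra.Repr k h ι),
      lHN h (lN a n) = ∑ i ∈ r.index, lN (act (r.left i) a) (lHN (r.right i) n))
  ∧ (∀ n : N, rN 1 n = n) ∧ (∀ (a b : A) (n : N), rN (a * b) n = rN b (rN a n))
  ∧ (∀ n : N, rHN 1 n = n) ∧ (∀ (g h : H) (n : N), rHN (g * h) n = rHN h (rHN g n))
  ∧ (∀ (h : H) (a : A) (n : N) (ι : Type u) (r : Coalgebra.Repr k h ι),
      rN a (rHN h n) = ∑ i ∈ r.index, rHN (r.right i) (rN (act (r.left i) a) n))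
  ∧ (∀ (a b : A) (n : N), lN a (rN b n) = rN b (lN a n))
  ∧ (∀ (a : A) (h : H) (n : N), lN a (rHN h n) = rHN h (lN a n))
  ∧ (∀ (h : H) (a : A) (n : N), lHN h (rN a n) = rN a (lHN h n))
  ∧ (∀ (g h : H) (n : N), lHN g (rHN h n) = rHN h (lHN g n))

theorem Ae_is_smash_bimodule (act : H →ₗ[k] A →ₗ[k] A)
    (hA : IsModuleAlgebra.{u} k H A act)
    (Sinv : H →ₗ[k] H)
    (hS : ∀ h : H, Sinv (HopfAlgebra.antipode (R := k) h) = h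
      ∧ HopfAlgebra.antipode (R := k) (Sinv h) = h) :
    ∃ (lE rE : A →ₗ[k] (A ⊗[k] A) →ₗ[k] (A ⊗[k] A))
      (lHE rHE : H →ₗ[k] (A ⊗[k] A) →ₗ[k] (A ⊗[k] A)),
      (∀ (a x y : A), lE a (x ⊗ₜ[k] y) = (a * x) ⊗ₜ[k] y)
      ∧ (∀ (h : H) (x y : A), lHE h (x ⊗ₜ[k] y) = act h x ⊗ₜ[k] y)
      ∧ (∀ (b x y : A), rE b (x ⊗ₜ[k] y) = x ⊗ₜ[k] (y * b))
      ∧ (∀ (g : H) (x y : A), rHE g (x ⊗ₜ[k] y) = x ⊗ₜ[k] act (Sinv g) y)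
      ∧ IsSmashBimodule.{u} k H A act lE rE lHE rHE := by
  obtain ⟨act_one, act_mul, -, act_mul_repr⟩ := hA
  have act_mul_conv := toConv_flip_mul_of_forall_repr act act_mul_repr
  refine ⟨LinearMap.rTensorHom A ∘ₗ LinearMap.mul k A,
    LinearMap.lTensorHom A ∘ₗ (LinearMap.mul k A).flip, LinearMap.rTensorHom A ∘ₗ act,
    LinearMap.lTensorHom A ∘ₗ act ∘ₗ Sinv, fun _ _ _ ↦ rfl, fun _ _ _ ↦ rfl, fun _ _ _ ↦ rfl,
    fun _ _ _ ↦ rfl, ?_⟩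
  refine ⟨fun n ↦ ?_, fun a b n ↦ ?_, fun n ↦ ?_, fun g h n ↦ ?_, fun h a n ι r ↦ ?_, fun n ↦ ?_,
    fun a b n ↦ ?_, fun n ↦ ?_, fun g h n ↦ ?_, fun h a n ι r ↦ ?_, fun a b n ↦ ?_, fun a h n ↦ ?_,
    fun h a n ↦ ?_, fun g h n ↦ ?_⟩ <;>
  induction n using TensorProduct.induction_on with
  | zero => simp
  | add u v hu hv => simp only [map_add, hu, hv, Finset.sum_add_distrib]
  | tmul x y =>
    simp [mul_assoc, act_one, act_mul, HopfAlgebra.invAntipode_one Sinv hS,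
      HopfAlgebra.invAntipode_mul Sinv hS, ← sum_tmul, ← tmul_sum, ← act_mul_repr,
      ← act_invAntipode_apply_mul act act_one act_mul act_mul_conv Sinv hS]
end
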